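/- arXiv:2105.12193 — 5 statements merged into one kernel-verified Lean document; each statement's English description precedes it below -/
import Mathlib

section
/- Let (M, d) be a compact metric space and let A, B be two disjoint nonempty compact subsets of M. Then either there exists a connected component of M meeting both A and B, or M = M_A ⊎ M_B, where M_A and M_B are disjoint compact subsets of M containing A and B, respectively. -/
open Set

/-- If the connected component of `x` is disjoint from a compact set `B`, then there is a
clopen set containing `x` disjoint from `B`. -/
lemma exists_clopen_disjoint {M : Type*} [MetricSpace M] [CompactSpace M]
    (x : M) (B : Set M) (hB : IsCompact B) (h : connectedComponent x ∩ B = ∅) :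
    ∃ C : Set M, IsClopen C ∧ x ∈ C ∧ C ∩ B = ∅ := by
  have hcc := connectedComponent_eq_iInter_isClopen x
  have hempty : (B ∩ ⋂ s : { s : Set M // IsClopen s ∧ x ∈ s }, (s : Set M)) = ∅ := by
    rw [← hcc, inter_comm]; exact h
  obtain ⟨u, hu⟩ := hB.elim_finite_subfamily_closed
    (fun s : { s : Set M // IsClopen s ∧ x ∈ s } => (s : Set M))
    (fun s => s.2.1.1) hempty
  refine ⟨⋂ s ∈ u, (s : Set M), ?_, ?_, ?_⟩
  · exact isClopen_biInter_finset (fun s _ => s.2.1)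
  · exact mem_iInter₂.2 fun s _ => s.2.2
  · rw [inter_comm]; exact hu

/-- Whyburn's lemma: in a compact metric space `M` with disjoint nonempty compact subsets
`A` and `B`, either some connected component of `M` meets both `A` and `B`, or
`M = M_A ⊎ M_B` with `M_A, M_B` disjoint compact sets containing `A` and `B` respectively. -/
theorem whyburn_separation {M : Type*} [MetricSpace M] [CompactSpace M]
    (A B : Set M) (hA : IsCompact A) (hB : IsCompact B)
    (hAne : A.Nonempty) (hBne : B.Nonempty) (hAB : Disjoint A B) :
    (∃ x : M, (connectedComponent x ∩ A).Nonempty ∧ (connectedComponent x ∩ B).Nonempty) ∨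
    (∃ MA MB : Set M, IsCompact MA ∧ IsCompact MB ∧ A ⊆ MA ∧ B ⊆ MB ∧
      MA ∪ MB = univ ∧ Disjoint MA MB) := by
  by_cases hex : ∃ x : M, (connectedComponent x ∩ A).Nonempty ∧
      (connectedComponent x ∩ B).Nonempty
  · exact Or.inl hex
  · right
    push_neg at hex
    -- For each a, find a clopen set disjoint from B, containing a when a ∈ A
    have key : ∀ a : M, ∃ C : Set M, IsClopen C ∧ C ∩ B = ∅ ∧ (a ∈ A → a ∈ C) := by
      intro a
      by_cases ha : a ∈ A
      · obtain ⟨C, h1, h2, h3⟩ := exists_clopen_disjoint a B hB (by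
          by_contra hne
          rw [← Ne, ← nonempty_iff_ne_empty] at hne
          exact hne.ne_empty (hex a ⟨a, mem_connectedComponent, ha⟩))
        exact ⟨C, h1, h3, fun _ => h2⟩
      · exact ⟨∅, isClopen_empty, by simp, fun h => absurd h ha⟩
    choose C hCclopen hCB hCmem using key
    obtain ⟨t, htc⟩ := hA.elim_finite_subcover C (fun a => (hCclopen a).2)
      (fun a ha => mem_iUnion.2 ⟨a, hCmem a ha⟩)
    set U : Set M := ⋃ a ∈ t, C a with hU
    have hUclopen : IsClopen U := isClopen_biUnion_finset (fun a _ => hCclopen a)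
    have hUB : U ∩ B = ∅ := by
      rw [hU, iUnion₂_inter]
      simp only [hCB, iUnion_empty]
    refine ⟨U, Uᶜ, hUclopen.isClosed.isCompact, hUclopen.compl.isClosed.isCompact,
      fun a ha => ?_, fun b hb => ?_, by simp, disjoint_compl_right⟩
    · exact htc ha
    · intro hbU
      exact absurd hUB (nonempty_iff_ne_empty.1 ⟨b, hbU, hb⟩)
end

section
/- Let u ∈ C²[0,π] with u(0) = u(π) = 0 and suppose u satisfies -u'' = λ u' + u + (λ - u²)u² on (0,π), with u(x) > 0 for all x ∈ (0,π). Then λ > 0. -/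
/-!
Multiplying the equation by `u` and integrating by parts (the boundary terms vanish) gives
`λ ∫ u³ = ∫ u'² - ∫ u² + ∫ u⁵`. Wirtinger's inequality `∫ u² ≤ ∫ u'²` on `[0, π]` makes the
right-hand side positive, and `∫ u³ > 0`. Wirtinger's inequality itself follows from
`(u² cot)' = u'² - u² - (u' - u cot)²`, since `u² cot x → 0` at the zeros `0, π` of `sin`.
-/

open Set Real Filter Topology intervalIntegral

theorem continuousWithinAt_sq_mul_cos_div_sin {u : ℝ → ℝ} {d a : ℝ} {s : Set ℝ}
    (hu : HasDerivWithinAt u d s a) (hua : u a = 0) (hsin : sin a = 0) :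
    ContinuousWithinAt (fun x => u x ^ 2 * (cos x / sin x)) s a := by
  have hcos : cos a ≠ 0 := by
    intro hcos
    simpa [hsin, hcos] using sin_sq_add_cos_sq a
  have hslope_u := hasDerivWithinAt_iff_tendsto_slope.mp hu
  have hslope_sin := hasDerivWithinAt_iff_tendsto_slope.mp
    ((hasDerivAt_sin a).hasDerivWithinAt : HasDerivWithinAt sin (cos a) s a)
  have hu0 : Tendsto u (𝓝[s \ {a}] a) (𝓝 0) :=
    hua ▸ hu.continuousWithinAt.tendsto.mono_left (nhdsWithin_mono _ sdiff_subset)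
  have hcos_lim : Tendsto cos (𝓝[s \ {a}] a) (𝓝 (cos a)) :=
    (continuous_cos.tendsto a).mono_left nhdsWithin_le_nhds
  have hlim := (hslope_u.div hslope_sin hcos).mul (hu0.mul hcos_lim)
  rw [← continuousWithinAt_sdiff_self, ContinuousWithinAt, hua]
  rw [zero_mul, mul_zero] at hlim
  rw [sq, zero_mul, zero_mul]
  refine hlim.congr' ?_
  filter_upwards [self_mem_nhdsWithin] with x hx
  have hxa : x - a ≠ 0 := sub_ne_zero.mpr hx.2
  rw [Pi.div_apply, slope_def_field, slope_def_field, hua, hsin, sub_zero, sub_zero,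
    div_div_div_cancel_right₀ hxa]
  ring

theorem continuousOn_sq_mul_cos_div_sin {u u' : ℝ → ℝ}
    (hu' : ∀ x ∈ Icc (0:ℝ) π, HasDerivWithinAt u (u' x) (Icc 0 π) x)
    (h0 : u 0 = 0) (hπ : u π = 0) :
    ContinuousOn (fun x => u x ^ 2 * (cos x / sin x)) (Icc 0 π) := by
  intro x hx
  by_cases hsin : sin x = 0
  · have hux : u x = 0 := by
      rcases hx.1.eq_or_lt with rfl | hx0
      · exact h0
      rcases hx.2.eq_or_lt with rfl | hxπ
      · exact hπ
      exact absurd hsin (sin_pos_of_pos_of_lt_pi hx0 hxπ).ne'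
    exact continuousWithinAt_sq_mul_cos_div_sin (hu' x hx) hux hsin
  · exact ((hu' x hx).continuousWithinAt.pow 2).mul
      (continuous_cos.continuousWithinAt.div continuous_sin.continuousWithinAt hsin)

theorem hasDerivAt_sq_mul_cos_div_sin {u : ℝ → ℝ} {d x : ℝ} (hu : HasDerivAt u d x)
    (hsin : sin x ≠ 0) :
    HasDerivAt (fun x => u x ^ 2 * (cos x / sin x))
      (2 * u x * d * (cos x / sin x) - u x ^ 2 * (1 + (cos x / sin x) ^ 2)) x := by
  have h : HasDerivAt (fun y => u y ^ 2 * (cos y / sin y)) _ x :=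
    (hu.pow 2).mul ((hasDerivAt_cos x).div (hasDerivAt_sin x) hsin)
  convert h using 1
  simp only [Pi.pow_apply]
  field_simp
  ring

theorem integral_sq_le_integral_sq_deriv {u u' : ℝ → ℝ}
    (hu' : ∀ x ∈ Icc (0:ℝ) π, HasDerivWithinAt u (u' x) (Icc 0 π) x)
    (hcu' : ContinuousOn u' (Icc 0 π)) (h0 : u 0 = 0) (hπ : u π = 0) :
    ∫ x in (0:ℝ)..π, u x ^ 2 ≤ ∫ x in (0:ℝ)..π, u' x ^ 2 := by
  have hcu : ContinuousOn u (Icc 0 π) := fun x hx => (hu' x hx).continuousWithinAt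
  have key := sub_le_integral_of_hasDeriv_right_of_le
    (φ := fun x => u' x ^ 2 - u x ^ 2) pi_pos.le
    (continuousOn_sq_mul_cos_div_sin hu' h0 hπ)
    (fun x hx => (hasDerivAt_sq_mul_cos_div_sin
      ((hu' x (Ioo_subset_Icc_self hx)).hasDerivAt (Icc_mem_nhds hx.1 hx.2))
      (sin_pos_of_pos_of_lt_pi hx.1 hx.2).ne').hasDerivWithinAt)
    ((hcu'.pow 2).sub (hcu.pow 2)).integrableOn_Icc
    (fun x _ => by nlinarith [sq_nonneg (u' x - u x * (cos x / sin x))])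
  have hint' : IntervalIntegrable (fun x => u' x ^ 2) MeasureTheory.volume 0 π :=
    (hcu'.pow 2).intervalIntegrable_of_Icc pi_pos.le
  have hint : IntervalIntegrable (fun x => u x ^ 2) MeasureTheory.volume 0 π :=
    (hcu.pow 2).intervalIntegrable_of_Icc pi_pos.le
  rw [integral_sub hint' hint] at key
  simp only [h0, hπ] at key
  linarith

theorem mul_integral_cube_eq_of_ode {lam a b : ℝ} {u u' u'' : ℝ → ℝ} (hab : a ≤ b)
    (hu' : ∀ x ∈ Icc a b, HasDerivWithinAt u (u' x) (Icc a b) x)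
    (hu'' : ∀ x ∈ Icc a b, HasDerivWithinAt u' (u'' x) (Icc a b) x)
    (hode : ∀ x ∈ Ioo a b, -(u'' x) = lam * u' x + u x + (lam - (u x)^2) * (u x)^2)
    (ha : u a = 0) (hb : u b = 0) :
    lam * ∫ x in a..b, u x ^ 3 =
      (∫ x in a..b, u' x ^ 2) - (∫ x in a..b, u x ^ 2) + ∫ x in a..b, u x ^ 5 := by
  have hcu : ContinuousOn u (Icc a b) := fun x hx => (hu' x hx).continuousWithinAt
  have hcu' : ContinuousOn u' (Icc a b) := fun x hx => (hu'' x hx).continuousWithinAt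
  have hint : ∀ n : ℕ, IntervalIntegrable (fun x => u x ^ n) MeasureTheory.volume a b :=
    fun n => (hcu.pow n).intervalIntegrable_of_Icc hab
  have hint' : IntervalIntegrable (fun x => u' x ^ 2) MeasureTheory.volume a b :=
    (hcu'.pow 2).intervalIntegrable_of_Icc hab
  have hftc := integral_eq_sub_of_hasDeriv_right_of_le hab
    (f := fun x => u' x * u x + lam * u x ^ 2 / 2)
    (f' := fun x => u' x ^ 2 - u x ^ 2 - lam * u x ^ 3 + u x ^ 5)
    ((hcu'.mul hcu).add ((hcu.pow 2).const_smul lam |>.div_const 2))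
    (fun x hx => by
      have hux := (hu' x (Ioo_subset_Icc_self hx)).hasDerivAt (Icc_mem_nhds hx.1 hx.2)
      have hu'x := (hu'' x (Ioo_subset_Icc_self hx)).hasDerivAt (Icc_mem_nhds hx.1 hx.2)
      refine ((hu'x.mul hux).add (((hux.pow 2).const_mul lam).div_const 2))
        |>.hasDerivWithinAt.congr_deriv ?_
      linear_combination (-(u x)) * hode x hx)
    ((((hint'.sub (hint 2)).sub ((hint 3).const_mul lam)).add (hint 5)))
  rw [integral_add ((hint'.sub (hint 2)).sub ((hint 3).const_mul lam)) (hint 5),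
    integral_sub (hint'.sub (hint 2)) ((hint 3).const_mul lam), integral_sub hint' (hint 2),
    integral_const_mul] at hftc
  simp only [ha, hb] at hftc
  linarith

theorem positive_solution_lambda_pos_general (lam : ℝ) (u u' u'' : ℝ → ℝ)
    (hu' : ∀ x ∈ Icc (0:ℝ) π, HasDerivWithinAt u (u' x) (Icc 0 π) x)
    (hu'' : ∀ x ∈ Icc (0:ℝ) π, HasDerivWithinAt u' (u'' x) (Icc 0 π) x)
    (hode : ∀ x ∈ Ioo (0:ℝ) π,
      -(u'' x) = lam * u' x + u x + (lam - (u x)^2) * (u x)^2)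
    (hbc0 : u 0 = 0) (hbcpi : u π = 0)
    (hpos : ∀ x ∈ Ioo (0:ℝ) π, 0 < u x) :
    0 < lam := by
  have hcu : ContinuousOn u (Icc 0 π) := fun x hx => (hu' x hx).continuousWithinAt
  have hcu' : ContinuousOn u' (Icc 0 π) := fun x hx => (hu'' x hx).continuousWithinAt
  have hpos_integral : ∀ n : ℕ, 0 < ∫ x in (0:ℝ)..π, u x ^ n := fun n =>
    intervalIntegral_pos_of_pos_on ((hcu.pow n).intervalIntegrable_of_Icc pi_pos.le)
      (fun x hx => pow_pos (hpos x hx) n) pi_pos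
  have henergy := mul_integral_cube_eq_of_ode pi_pos.le hu' hu'' hode hbc0 hbcpi
  have hwirtinger := integral_sq_le_integral_sq_deriv hu' hcu' hbc0 hbcpi
  have hcubic : 0 < lam * ∫ x in (0:ℝ)..π, u x ^ 3 := by linarith [hpos_integral 5]
  exact pos_of_mul_pos_left hcubic (hpos_integral 3).le

/-- If `u ∈ C²[0,π]` is a positive solution of `-u'' = λ u' + u + (λ - u²)u²` on `(0,π)`
with `u(0) = u(π) = 0`, then `λ > 0`. -/
theorem positive_solution_lambda_pos (lam : ℝ) (u u' u'' : ℝ → ℝ)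
    (hu' : ∀ x ∈ Icc (0:ℝ) π, HasDerivWithinAt u (u' x) (Icc 0 π) x)
    (hu'' : ∀ x ∈ Icc (0:ℝ) π, HasDerivWithinAt u' (u'' x) (Icc 0 π) x)
    (hcont : ContinuousOn u'' (Icc 0 π))
    (hode : ∀ x ∈ Ioo (0:ℝ) π,
      -(u'' x) = lam * u' x + u x + (lam - (u x)^2) * (u x)^2)
    (hbc0 : u 0 = 0) (hbcpi : u π = 0)
    (hpos : ∀ x ∈ Ioo (0:ℝ) π, 0 < u x) :
    0 < lam :=
  positive_solution_lambda_pos_general lam u u' u'' hu' hu'' hode hbc0 hbcpi hpos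
end

section
/- Let u ∈ C²[0,π] with u(0) = u(π) = 0 be a positive solution of -u'' = λ u' + u + (λ - u²)u² on (0,π). Then the maximum of u on [0,π] satisfies ‖u‖_∞ ≤ √λ + 1. -/
open Set Real

/-- If `u ∈ C²[0,π]` is a positive solution of `-u'' = λ u' + u + (λ - u²)u²` on `(0,π)`
with `u(0) = u(π) = 0`, then `‖u‖_∞ ≤ √λ + 1`. -/
theorem positive_solution_sup_bound (lam : ℝ) (u u' u'' : ℝ → ℝ)
    (hu' : ∀ x ∈ Icc (0:ℝ) π, HasDerivWithinAt u (u' x) (Icc 0 π) x)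
    (hu'' : ∀ x ∈ Icc (0:ℝ) π, HasDerivWithinAt u' (u'' x) (Icc 0 π) x)
    (hcont : ContinuousOn u'' (Icc 0 π))
    (hode : ∀ x ∈ Ioo (0:ℝ) π,
      -(u'' x) = lam * u' x + u x + (lam - (u x)^2) * (u x)^2)
    (hbc0 : u 0 = 0) (hbcpi : u π = 0)
    (hpos : ∀ x ∈ Ioo (0:ℝ) π, 0 < u x) :
    ∀ x ∈ Icc (0:ℝ) π, |u x| ≤ Real.sqrt lam + 1 := by
  have hπ : (0:ℝ) < π := Real.pi_pos
  have hucont : ContinuousOn u (Icc 0 π) := fun x hx => (hu' x hx).continuousWithinAt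
  obtain ⟨x₀, hx₀, hmax⟩ := (isCompact_Icc).exists_isMaxOn (nonempty_Icc.2 hπ.le) hucont
  have hmid : (π/2) ∈ Ioo (0:ℝ) π := ⟨by linarith, by linarith⟩
  have hM : 0 < u x₀ := lt_of_lt_of_le (hpos _ hmid) (hmax ⟨hmid.1.le, hmid.2.le⟩)
  have hx₀i : x₀ ∈ Ioo (0:ℝ) π := by
    rcases hx₀ with ⟨h1, h2⟩
    constructor
    · rcases h1.lt_or_eq with h | h
      · exact h
      · exfalso; rw [← h, hbc0] at hM; exact lt_irrefl _ hM
    · rcases h2.lt_or_eq with h | h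
      · exact h
      · exfalso; rw [h, hbcpi] at hM; exact lt_irrefl _ hM
  have hnhds : Icc (0:ℝ) π ∈ nhds x₀ := Icc_mem_nhds hx₀i.1 hx₀i.2
  have hdu : HasDerivAt u (u' x₀) x₀ := (hu' x₀ hx₀).hasDerivAt hnhds
  have hdu' : HasDerivAt u' (u'' x₀) x₀ := (hu'' x₀ hx₀).hasDerivAt hnhds
  have hu'0 : u' x₀ = 0 := (hmax.isLocalMax hnhds).hasDerivAt_eq_zero hdu
  -- second derivative nonpositive at the interior max
  have hu''0 : u'' x₀ ≤ 0 := by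
    by_contra h
    push_neg at h
    -- u' is positive just to the right of x₀
    have hslope := hasDerivAt_iff_tendsto_slope.1 hdu'
    have hev : ∀ᶠ y in nhdsWithin x₀ (Ioi x₀), 0 < u' y := by
      have h1 : ∀ᶠ y in nhdsWithin x₀ {x₀}ᶜ, 0 < slope u' x₀ y :=
        hslope (eventually_gt_nhds h)
      have h2 : nhdsWithin x₀ (Ioi x₀) ≤ nhdsWithin x₀ {x₀}ᶜ :=
        nhdsWithin_mono _ (fun y hy => ne_of_gt hy)
      filter_upwards [h2 h1, self_mem_nhdsWithin] with y hy hy'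
      have hyx : 0 < y - x₀ := sub_pos.2 hy'
      have : 0 < (u' y - u' x₀) / (y - x₀) := by rwa [slope_def_field] at hy
      rw [hu'0, sub_zero] at this
      have := mul_pos this hyx
      rw [div_mul_cancel₀] at this
      · exact this
      · exact ne_of_gt hyx
    obtain ⟨b, hb, hsub⟩ := mem_nhdsGT_iff_exists_Ioc_subset.1 hev
    set c := min b π with hc
    have hcx : x₀ < c := lt_min hb hx₀i.2
    have hcπ : c ≤ π := min_le_right _ _
    have hIcc : Icc x₀ c ⊆ Icc (0:ℝ) π := Icc_subset_Icc hx₀i.1.le hcπ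
    have hmono : StrictMonoOn u (Icc x₀ c) := by
      apply strictMonoOn_of_deriv_pos (convex_Icc _ _) (hucont.mono hIcc)
      intro y hy
      rw [interior_Icc] at hy
      have hyI : y ∈ Icc (0:ℝ) π := hIcc ⟨hy.1.le, hy.2.le⟩
      have hynb : Icc (0:ℝ) π ∈ nhds y :=
        Icc_mem_nhds (lt_of_lt_of_le hx₀i.1 hy.1.le) (lt_of_lt_of_le hy.2 hcπ)
      have : HasDerivAt u (u' y) y := (hu' y hyI).hasDerivAt hynb
      rw [this.deriv]
      exact hsub ⟨hy.1, hy.2.le.trans (min_le_left _ _)⟩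
    have : u x₀ < u c := hmono (left_mem_Icc.2 hcx.le) (right_mem_Icc.2 hcx.le) hcx
    exact absurd (hmax (hIcc (right_mem_Icc.2 hcx.le))) (not_le.2 this)
  -- the ODE at x₀ gives the cubic inequality
  have hcube : (u x₀)^3 ≤ 1 + lam * u x₀ := by
    have h := hode x₀ hx₀i
    rw [hu'0] at h
    nlinarith [hM, hu''0]
  set M := u x₀ with hMdef
  have hbound : M ≤ Real.sqrt lam + 1 := by
    rcases le_or_gt 0 lam with hl | hl
    · have hs : Real.sqrt lam * Real.sqrt lam = lam := Real.mul_self_sqrt hl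
      have hs0 : 0 ≤ Real.sqrt lam := Real.sqrt_nonneg _
      by_contra hcon
      push_neg at hcon
      nlinarith [hcube, hM, mul_pos (sub_pos.2 hcon) hM,
        mul_pos (mul_pos (sub_pos.2 hcon) hM) hM]
    · have hsz : Real.sqrt lam = 0 := Real.sqrt_eq_zero_of_nonpos hl.le
      rw [hsz]
      nlinarith [hcube, hM, mul_neg_of_neg_of_pos hl hM, sq_nonneg M,
        mul_pos hM hM, sq_nonneg (M - 1), sq_nonneg (M + 1)]
  -- conclude
  intro x hx
  have hxnn : 0 ≤ u x := by
    rcases hx.1.lt_or_eq with h1 | h1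
    · rcases hx.2.lt_or_eq with h2 | h2
      · exact (hpos x ⟨h1, h2⟩).le
      · rw [h2, hbcpi]
    · rw [← h1, hbc0]
  rw [abs_of_nonneg hxnn]
  exact le_trans (hmax hx) hbound
end

section
/- Let u ∈ C²[0,π] with u(0) = u(π) = 0 satisfy -u'' = λ u' + u + (λ - u²)u² on (0,π) with u > 0 on (0,π). Then 0 < λ ≤ 4(1 + √2)². -/
open Set Real

/-!
With `v = e^{λx/2} u` one has `v'' + v = e^{λx/2} (u'' + λu' + (λ²/4 + 1) u)`, and `v` vanishes
at `0` and `π`. Since `sin` is the first Dirichlet eigenfunction on `(0,π)`, the Wronskian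
`v' sin - v cos` vanishes at both ends, so by Rolle `v'' + v` has a zero `c ∈ (0,π)`.
By the equation, `t = u c > 0` then satisfies `λ²/4 = (λ - t²) t`, which forces `λ > 0`,
`t ≥ λ/4` and `t² ≤ λ`, hence `λ ≤ 16 ≤ 4(1 + √2)²`.
-/

theorem exists_mem_Ioo_add_self_eq_zero_of_hasDerivWithinAt {v v' v'' : ℝ → ℝ}
    (hv' : ∀ x ∈ Icc (0:ℝ) π, HasDerivWithinAt v (v' x) (Icc 0 π) x)
    (hv'' : ∀ x ∈ Icc (0:ℝ) π, HasDerivWithinAt v' (v'' x) (Icc 0 π) x)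
    (hv0 : v 0 = 0) (hvπ : v π = 0) :
    ∃ c ∈ Ioo 0 π, v'' c + v c = 0 := by
  set W : ℝ → ℝ := fun x => v' x * sin x - v x * cos x
  have hW : ∀ x ∈ Icc (0:ℝ) π,
      HasDerivWithinAt W ((v'' x + v x) * sin x) (Icc 0 π) x := fun x hx => by
    refine (((hv'' x hx).mul (hasDerivAt_sin x).hasDerivWithinAt).sub
      ((hv' x hx).mul (hasDerivAt_cos x).hasDerivWithinAt)).congr_deriv ?_
    ring
  obtain ⟨c, hc, hWc⟩ := exists_hasDerivAt_eq_zero pi_pos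
    (fun x hx => (hW x hx).continuousWithinAt) (by simp [W, hv0, hvπ])
    fun x hx => (hW x (Ioo_subset_Icc_self hx)).hasDerivAt (Icc_mem_nhds hx.1 hx.2)
  exact ⟨c, hc, (mul_eq_zero.mp hWc).resolve_right (sin_pos_of_pos_of_lt_pi hc.1 hc.2).ne'⟩

theorem hasDerivWithinAt_exp_mul_half_mul {u : ℝ → ℝ} {u'x x : ℝ} {s : Set ℝ} (lam : ℝ)
    (hu : HasDerivWithinAt u u'x s x) :
    HasDerivWithinAt (fun y => exp (lam * y / 2) * u y)
      (exp (lam * x / 2) * (u'x + lam / 2 * u x)) s x := by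
  have hexp : HasDerivAt (fun y => exp (lam * y / 2)) (exp (lam * x / 2) * (lam / 2)) x :=
    (hasDerivAt_exp _).comp x (((hasDerivAt_id x).const_mul lam).div_const 2 |>.congr_deriv
      (by ring))
  exact (hexp.hasDerivWithinAt.mul hu).congr_deriv (by ring)

theorem pos_and_le_sixteen_of_sq_div_four_mul_eq {lam t : ℝ} (ht : 0 < t)
    (h : lam ^ 2 / 4 * t = (lam - t ^ 2) * t ^ 2) : 0 < lam ∧ lam ≤ 16 := by
  have hbalance : lam ^ 2 / 4 = (lam - t ^ 2) * t := by
    have := ht.ne'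
    field_simp
    nlinarith
  have hlam : 0 < lam := by nlinarith [sq_nonneg lam, pow_pos ht 3]
  have hquarter : lam / 4 ≤ t := by nlinarith [pow_pos ht 3]
  have hsq : t ^ 2 ≤ lam := by nlinarith [sq_nonneg lam]
  exact ⟨hlam, by nlinarith [mul_self_le_mul_self (by positivity) hquarter]⟩

theorem positive_solution_lambda_bounds_general (lam : ℝ) (u u' u'' : ℝ → ℝ)
    (hu' : ∀ x ∈ Icc (0:ℝ) π, HasDerivWithinAt u (u' x) (Icc 0 π) x)
    (hu'' : ∀ x ∈ Icc (0:ℝ) π, HasDerivWithinAt u' (u'' x) (Icc 0 π) x)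
    (hode : ∀ x ∈ Ioo (0:ℝ) π,
      -(u'' x) = lam * u' x + u x + (lam - (u x)^2) * (u x)^2)
    (hbc0 : u 0 = 0) (hbcpi : u π = 0)
    (hpos : ∀ x ∈ Ioo (0:ℝ) π, 0 < u x) :
    0 < lam ∧ lam ≤ 4 * (1 + Real.sqrt 2)^2 := by
  obtain ⟨c, hc, hvc⟩ := exists_mem_Ioo_add_self_eq_zero_of_hasDerivWithinAt
    (v := fun y => exp (lam * y / 2) * u y)
    (v' := fun y => exp (lam * y / 2) * (u' y + lam / 2 * u y))
    (v'' := fun y => exp (lam * y / 2) *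
      (u'' y + lam / 2 * u' y + lam / 2 * (u' y + lam / 2 * u y)))
    (fun x hx => hasDerivWithinAt_exp_mul_half_mul lam (hu' x hx))
    (fun x hx => hasDerivWithinAt_exp_mul_half_mul lam
      ((hu'' x hx).add ((hu' x hx).const_mul (lam / 2))))
    (by simp [hbc0]) (by simp [hbcpi])
  have hcrit : u'' c + lam * u' c + (lam ^ 2 / 4 + 1) * u c = 0 := by
    have : exp (lam * c / 2) * (u'' c + lam * u' c + (lam ^ 2 / 4 + 1) * u c) = 0 := by
      rw [← hvc]; ring
    exact (mul_eq_zero.mp this).resolve_left (exp_pos _).ne'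
  obtain ⟨hlam, hle⟩ := pos_and_le_sixteen_of_sq_div_four_mul_eq (lam := lam) (hpos c hc)
    (by linarith [hode c hc])
  have hsqrt : 1 ≤ √2 := one_le_sqrt.mpr one_le_two
  exact ⟨hlam, by nlinarith⟩

/-- If `u ∈ C²[0,π]` is a positive solution of `-u'' = λ u' + u + (λ - u²)u²` on `(0,π)`
with `u(0) = u(π) = 0`, then `0 < λ ≤ 4(1 + √2)²`. -/
theorem positive_solution_lambda_bounds (lam : ℝ) (u u' u'' : ℝ → ℝ)
    (hu' : ∀ x ∈ Icc (0:ℝ) π, HasDerivWithinAt u (u' x) (Icc 0 π) x)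
    (hu'' : ∀ x ∈ Icc (0:ℝ) π, HasDerivWithinAt u' (u'' x) (Icc 0 π) x)
    (hcont : ContinuousOn u'' (Icc 0 π))
    (hode : ∀ x ∈ Ioo (0:ℝ) π,
      -(u'' x) = lam * u' x + u x + (lam - (u x)^2) * (u x)^2)
    (hbc0 : u 0 = 0) (hbcpi : u π = 0)
    (hpos : ∀ x ∈ Ioo (0:ℝ) π, 0 < u x) :
    0 < lam ∧ lam ≤ 4 * (1 + Real.sqrt 2)^2 :=
  positive_solution_lambda_bounds_general lam u u' u'' hu' hu'' hode hbc0 hbcpi hpos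
end

section
/- Let u ∈ C²[0,π] with u(0) = u(π) = 0 satisfy -u'' = u + (0 - u²)u² = u - u⁴ on (0,π) (i.e., the problem -u'' = λu' + u + (λ - u²)u² with λ = 0). Then u ≡ 0. -/
open Set Real MeasureTheory intervalIntegral

/-- If `u ∈ C²[0,π]` satisfies `-u'' = u - u⁴` on `(0,π)` with `u(0) = u(π) = 0`
(the problem `-u'' = λu' + u + (λ - u²)u²` with `λ = 0`), then `u ≡ 0`. -/
theorem lambda_zero_only_trivial (u u' u'' : ℝ → ℝ)
    (hu' : ∀ x ∈ Icc (0:ℝ) π, HasDerivWithinAt u (u' x) (Icc 0 π) x)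
    (hu'' : ∀ x ∈ Icc (0:ℝ) π, HasDerivWithinAt u' (u'' x) (Icc 0 π) x)
    (hcont : ContinuousOn u'' (Icc 0 π))
    (hode : ∀ x ∈ Ioo (0:ℝ) π, -(u'' x) = u x - (u x)^4)
    (hbc0 : u 0 = 0) (hbcpi : u π = 0) :
    ∀ x ∈ Icc (0:ℝ) π, u x = 0 := by
  have hpi : (0:ℝ) ≤ π := pi_pos.le
  have hcu : ContinuousOn u (Icc 0 π) := fun x hx => (hu' x hx).continuousWithinAt
  have hcu' : ContinuousOn u' (Icc 0 π) := fun x hx => (hu'' x hx).continuousWithinAt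
  set F : ℝ → ℝ := fun x => u' x * Real.sin x - u x * Real.cos x with hF
  set g : ℝ → ℝ := fun x => u'' x * Real.sin x + u x * Real.sin x with hg
  have hFc : ContinuousOn F (Icc 0 π) :=
    (hcu'.mul Real.continuous_sin.continuousOn).sub (hcu.mul Real.continuous_cos.continuousOn)
  have hgc : ContinuousOn g (Icc 0 π) :=
    (hcont.mul Real.continuous_sin.continuousOn).add (hcu.mul Real.continuous_sin.continuousOn)
  have hgint : IntervalIntegrable g volume 0 π := by
    apply ContinuousOn.intervalIntegrable
    rwa [uIcc_of_le hpi]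
  have hderiv : ∀ x ∈ Ioo (0:ℝ) π, HasDerivWithinAt F (g x) (Ioi x) x := by
    intro x hx
    have hmem : Icc (0:ℝ) π ∈ nhds x := Icc_mem_nhds hx.1 hx.2
    have hx' : x ∈ Icc (0:ℝ) π := Ioo_subset_Icc_self hx
    have h1 : HasDerivAt u (u' x) x := (hu' x hx').hasDerivAt hmem
    have h2 : HasDerivAt u' (u'' x) x := (hu'' x hx').hasDerivAt hmem
    have : HasDerivAt F (u'' x * Real.sin x + u' x * Real.cos x
        - (u' x * Real.cos x + u x * (-Real.sin x))) x :=
      (h2.mul (Real.hasDerivAt_sin x)).sub (h1.mul (Real.hasDerivAt_cos x))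
    have heq : u'' x * Real.sin x + u' x * Real.cos x
        - (u' x * Real.cos x + u x * (-Real.sin x)) = g x := by simp [hg]; ring
    exact (heq ▸ this).hasDerivWithinAt
  have hint : ∫ x in (0:ℝ)..π, g x = F π - F 0 :=
    integral_eq_sub_of_hasDeriv_right_of_le hpi hFc hderiv hgint
  have hFval : F π - F 0 = 0 := by
    simp [hF, hbc0, hbcpi, Real.sin_pi, Real.sin_zero]
  have hcongr : ∀ x ∈ uIcc (0:ℝ) π, g x = (u x)^4 * Real.sin x := by
    intro x hx
    rw [uIcc_of_le hpi] at hx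
    rcases eq_or_lt_of_le hx.1 with h0 | h0
    · simp [hg, ← h0]
    rcases eq_or_lt_of_le hx.2 with hpi' | hpi'
    · simp [hg, hpi']
    have := hode x ⟨h0, hpi'⟩
    have hu'' : u'' x = (u x)^4 - u x := by linarith
    simp only [hg, hu'']; ring
  have hzero : ∫ x in (0:ℝ)..π, (u x)^4 * Real.sin x = 0 := by
    rw [← intervalIntegral.integral_congr hcongr, hint, hFval]
  have hg4c : ContinuousOn (fun x => (u x)^4 * Real.sin x) (Icc 0 π) :=
    ((hcu.pow 4).mul Real.continuous_sin.continuousOn)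
  have hg4int : IntervalIntegrable (fun x => (u x)^4 * Real.sin x) volume 0 π := by
    apply ContinuousOn.intervalIntegrable
    rwa [uIcc_of_le hpi]
  have hnonneg : 0 ≤ᵐ[volume.restrict (Ioc 0 π)] fun x => (u x)^4 * Real.sin x := by
    filter_upwards [ae_restrict_mem measurableSet_Ioc] with x hx
    exact mul_nonneg (by positivity) (Real.sin_nonneg_of_mem_Icc ⟨hx.1.le, hx.2⟩)
  have hae : (fun x => (u x)^4 * Real.sin x) =ᵐ[volume.restrict (Ioc 0 π)] 0 :=
    (integral_eq_zero_iff_of_le_of_nonneg_ae hpi hnonneg hg4int).mp hzero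
  have hae' : (fun x => (u x)^4 * Real.sin x) =ᵐ[volume.restrict (Ioo 0 π)] 0 :=
    ae_restrict_of_ae_restrict_of_subset Ioo_subset_Ioc_self hae
  have heqon : EqOn (fun x => (u x)^4 * Real.sin x) 0 (Ioo 0 π) :=
    Measure.eqOn_open_of_ae_eq hae' isOpen_Ioo (hg4c.mono Ioo_subset_Icc_self)
      continuous_const.continuousOn
  intro x hx
  rcases eq_or_lt_of_le hx.1 with h0 | h0
  · rw [← h0]; exact hbc0
  rcases eq_or_lt_of_le hx.2 with hpi' | hpi'
  · rw [hpi']; exact hbcpi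
  have := heqon ⟨h0, hpi'⟩
  have hsin : 0 < Real.sin x := Real.sin_pos_of_pos_of_lt_pi h0 hpi'
  have : (u x)^4 = 0 := by
    have h := this
    simp only [Pi.zero_apply] at h
    exact (mul_eq_zero.mp h).resolve_right (ne_of_gt hsin)
  exact pow_eq_zero_iff (by norm_num) |>.mp this
end
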